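/- arXiv:1509.04669 — 6 statements merged into one kernel-verified Lean document; each statement's English description precedes it below -/
import Mathlib

section
/- Let (X,d) be a metric space and Γ a group acting on X by homeomorphisms, with a finite generating set S, and let d_Γ be the warped metric (the greatest metric satisfying d_Γ(x,x') ≤ d(x,x') and d_Γ(x,sx) ≤ 1 for all s ∈ S). Then d_Γ(x,x') is the infimum over all finite sequences x = x₀, x₁, …, x_N = x' in X and γ₀, …, γ_{N−1} in Γ of the sums ∑_{i=0}^{N−1} (|γ_i| + d(γ_i x_i, x_{i+1})), where |γ| denotes the word length of γ with respect to S. -/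
/-!
Write `ρ` for the infimum of the chain sums. Along a word for `γ` the triangle inequality gives
`d_Γ(y, γy) ≤ |γ|`, so each step of a chain costs at least `d_Γ(xᵢ, xᵢ₊₁)` and `d_Γ ≤ ρ`.
Conversely, concatenating chains gives the triangle inequality for `ρ`, and one-step chains give
`ρ ≤ d` and `ρ(x, s^{±1} x) ≤ 1`. The chain infimum is not visibly symmetric, but its
symmetrisation `(ρ(x, y) + ρ(y, x)) / 2` is a metric (it dominates `d_Γ`, hence separates points)
satisfying both constraints, so it lies below `d_Γ` by maximality; together with
`d_Γ(x', x) ≤ ρ(x', x)` this forces `ρ ≤ d_Γ`.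
-/

open scoped BigOperators

/-- Word length of `g` with respect to the generating set `S` (symmetrised). -/
noncomputable def wordLength {G : Type*} [Group G] (S : Set G) (g : G) : ℕ :=
  sInf {n : ℕ | ∃ f : Fin n → G, (∀ i, f i ∈ S ∨ (f i)⁻¹ ∈ S) ∧ (List.ofFn f).prod = g}

/-- The set of sums `∑ (|γᵢ| + d(γᵢ xᵢ, xᵢ₊₁))` over finite chains from `x` to `x'`. -/
def chainSums {G : Type*} [Group G] {X : Type*} (S : Set G) (act : G → X → X)
    (d : X → X → ℝ) (x x' : X) : Set ℝ :=
  {c | ∃ (N : ℕ) (xs : Fin (N + 1) → X) (γs : Fin N → G),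
    xs 0 = x ∧ xs (Fin.last N) = x' ∧
    c = ∑ i : Fin N, ((wordLength S (γs i) : ℝ) + d (act (γs i) (xs i.castSucc)) (xs i.succ))}

open scoped Pointwise

section WordLength

variable {G : Type*} [Group G] (S : Set G)

lemma wordLength_one : wordLength S (1 : G) = 0 :=
  Nat.sInf_eq_zero.mpr <| .inl ⟨Fin.elim0, fun i => i.elim0, by simp⟩

lemma wordLength_le_one {s : G} (hs : s ∈ S ∨ s⁻¹ ∈ S) : wordLength S s ≤ 1 :=
  Nat.sInf_le ⟨fun _ => s, fun _ => hs, by simp⟩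

lemma exists_list_length_eq_wordLength (hS : Subgroup.closure S = ⊤) (g : G) :
    ∃ l : List G, l.length = wordLength S g ∧ (∀ s ∈ l, s ∈ S ∨ s⁻¹ ∈ S) ∧ l.prod = g := by
  have hne : {n : ℕ | ∃ f : Fin n → G,
      (∀ i, f i ∈ S ∨ (f i)⁻¹ ∈ S) ∧ (List.ofFn f).prod = g}.Nonempty := by
    have hg : g ∈ Submonoid.closure (S ∪ S⁻¹) := by
      rw [← Subgroup.closure_toSubmonoid, hS]; trivial
    obtain ⟨l, hl, rfl⟩ := Submonoid.exists_list_of_mem_closure hg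
    exact ⟨l.length, l.get, fun i => hl _ (List.get_mem l i), by rw [List.ofFn_get]⟩
  obtain ⟨f, hf, hprod⟩ := Nat.sInf_mem hne
  refine ⟨List.ofFn f, List.length_ofFn, ?_, hprod⟩
  simpa [List.mem_ofFn] using hf

end WordLength

lemma act_inv_act {G : Type*} [Group G] {X : Type*} {act : G → X → X}
    (hact1 : ∀ x, act 1 x = x) (hactmul : ∀ g h x, act (g * h) x = act g (act h x))
    (g : G) (x : X) : act g⁻¹ (act g x) = x := by
  rw [← hactmul, inv_mul_cancel, hact1]

lemma le_wordLength_of_le_one {G : Type*} [Group G] {X : Type*} {S : Set G} {act : G → X → X}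
    (hS : Subgroup.closure S = ⊤) (hact1 : ∀ x, act 1 x = x)
    (hactmul : ∀ g h x, act (g * h) x = act g (act h x)) {ρ : X → X → ℝ}
    (hrefl : ∀ x, ρ x x = 0) (hsymm : ∀ x y, ρ x y = ρ y x)
    (htri : ∀ x y z, ρ x z ≤ ρ x y + ρ y z) (hgen : ∀ x, ∀ s ∈ S, ρ x (act s x) ≤ 1)
    (g : G) (x : X) : ρ x (act g x) ≤ wordLength S g := by
  have hletter : ∀ s, s ∈ S ∨ s⁻¹ ∈ S → ∀ y, ρ y (act s y) ≤ 1 := by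
    rintro s (hs | hs) y
    · exact hgen y s hs
    · simpa [act_inv_act hact1 hactmul, hsymm] using hgen (act s y) s⁻¹ hs
  have hword : ∀ l : List G, (∀ s ∈ l, s ∈ S ∨ s⁻¹ ∈ S) →
      ∀ y, ρ y (act l.prod y) ≤ l.length := by
    intro l
    induction l with
    | nil => simp [hact1, hrefl]
    | cons s l ih =>
      intro hl y
      have hs := hletter s (hl s List.mem_cons_self) (act l.prod y)
      have hrest := ih (fun t ht => hl t (List.mem_cons_of_mem s ht)) y
      simp only [List.prod_cons, hactmul, List.length_cons, Nat.cast_succ]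
      linarith [htri y (act l.prod y) (act s (act l.prod y))]
  obtain ⟨l, hlen, hl, rfl⟩ := exists_list_length_eq_wordLength S hS g
  exact hlen ▸ hword l hl x

section Chains

variable {G : Type*} [Group G] {X : Type*} {S : Set G} {act : G → X → X} {d : X → X → ℝ}

lemma zero_mem_chainSums (x : X) : (0 : ℝ) ∈ chainSums S act d x x :=
  ⟨0, fun _ => x, Fin.elim0, rfl, rfl, by simp⟩

lemma add_step_mem_chainSums {x y : X} {c : ℝ} (hc : c ∈ chainSums S act d x y) (γ : G) (z : X) :
    c + ((wordLength S γ : ℝ) + d (act γ y) z) ∈ chainSums S act d x z := by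
  obtain ⟨N, xs, γs, h0, hl, rfl⟩ := hc
  refine ⟨N + 1, Fin.snoc xs z, Fin.snoc γs γ, ?_, by simp, ?_⟩
  · rw [← Fin.castSucc_zero, Fin.snoc_castSucc, h0]
  · simp [Fin.sum_univ_castSucc, -Fin.castSucc_succ, Fin.succ_castSucc, hl]

lemma step_mem_chainSums (γ : G) (x y : X) :
    (wordLength S γ : ℝ) + d (act γ x) y ∈ chainSums S act d x y := by
  simpa using add_step_mem_chainSums (zero_mem_chainSums x) γ y

lemma chainSums_induction {x : X} {motive : X → ℝ → Prop} (zero : motive x 0)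
    (step : ∀ y c γ z, motive y c → motive z (c + ((wordLength S γ : ℝ) + d (act γ y) z)))
    {y : X} {c : ℝ} (hc : c ∈ chainSums S act d x y) : motive y c := by
  obtain ⟨N, xs, γs, h0, rfl, rfl⟩ := hc
  induction N with
  | zero => simpa [← h0] using zero
  | succ N ih =>
    rw [Fin.sum_univ_castSucc]
    simpa using step _ _ (γs (Fin.last N)) _ (ih (xs ∘ Fin.castSucc) (γs ∘ Fin.castSucc) h0)

lemma chainSums_add_subset (x y z : X) :
    chainSums S act d x y + chainSums S act d y z ⊆ chainSums S act d x z := by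
  rintro _ ⟨b, hb, c, hc, rfl⟩
  refine chainSums_induction (motive := fun z c => b + c ∈ chainSums S act d x z)
    (by simpa using hb) (fun w c γ z ih => ?_) hc
  simpa only [add_assoc] using add_step_mem_chainSums ih γ z

lemma le_of_mem_chainSums {ρ : X → X → ℝ} (hrefl : ∀ x, ρ x x = 0)
    (htri : ∀ x y z, ρ x z ≤ ρ x y + ρ y z) (hword : ∀ g x, ρ x (act g x) ≤ wordLength S g)
    (hd : ∀ x y, ρ x y ≤ d x y) {x y : X} {c : ℝ} (hc : c ∈ chainSums S act d x y) :
    ρ x y ≤ c := by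
  refine chainSums_induction (motive := fun y c => ρ x y ≤ c) (hrefl x).le
    (fun y c γ z ih => ?_) hc
  calc ρ x z ≤ ρ x y + (ρ y (act γ y) + ρ (act γ y) z) :=
        by linarith [htri x y z, htri y (act γ y) z]
    _ ≤ c + ((wordLength S γ : ℝ) + d (act γ y) z) := by gcongr <;> apply_assumption

end Chains

noncomputable def chainDist {G : Type*} [Group G] {X : Type*} (S : Set G) (act : G → X → X)
    (d : X → X → ℝ) (x y : X) : ℝ :=
  sInf (chainSums S act d x y)

section ChainDist

variable {G : Type*} [Group G] {X : Type*} [PseudoMetricSpace X] {S : Set G} {act : G → X → X}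

lemma chainSums_nonempty (x y : X) : (chainSums S act dist x y).Nonempty :=
  ⟨_, step_mem_chainSums 1 x y⟩

lemma chainSums_nonneg {x y : X} {c : ℝ} (hc : c ∈ chainSums S act dist x y) : 0 ≤ c :=
  chainSums_induction (motive := fun _ c => 0 ≤ c) le_rfl
    (fun _ _ _ _ ih => by positivity) hc

lemma bddBelow_chainSums (x y : X) : BddBelow (chainSums S act dist x y) :=
  ⟨0, fun _ => chainSums_nonneg⟩

lemma chainDist_le_of_mem {x y : X} {c : ℝ} (hc : c ∈ chainSums S act dist x y) :
    chainDist S act dist x y ≤ c :=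
  csInf_le (bddBelow_chainSums x y) hc

lemma chainDist_nonneg (x y : X) : 0 ≤ chainDist S act dist x y :=
  le_csInf (chainSums_nonempty x y) fun _ => chainSums_nonneg

lemma chainDist_triangle (x y z : X) :
    chainDist S act dist x z ≤ chainDist S act dist x y + chainDist S act dist y z := by
  unfold chainDist
  rw [← csInf_add (chainSums_nonempty x y) (bddBelow_chainSums x y)
    (chainSums_nonempty y z) (bddBelow_chainSums y z)]
  exact csInf_le_csInf (bddBelow_chainSums x z)
    ((chainSums_nonempty x y).add (chainSums_nonempty y z)) (chainSums_add_subset x y z)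

lemma chainDist_le_wordLength (g : G) (x : X) :
    chainDist S act dist x (act g x) ≤ wordLength S g := by
  simpa using chainDist_le_of_mem (S := S) (act := act) (step_mem_chainSums g x (act g x))

lemma chainDist_le_dist (hact1 : ∀ x, act 1 x = x) (x y : X) :
    chainDist S act dist x y ≤ dist x y := by
  simpa [wordLength_one, hact1] using
    chainDist_le_of_mem (S := S) (act := act) (step_mem_chainSums 1 x y)

lemma chainDist_self (hact1 : ∀ x, act 1 x = x) (x : X) : chainDist S act dist x x = 0 :=
  le_antisymm (by simpa using chainDist_le_dist hact1 x x) (chainDist_nonneg x x)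

lemma le_chainDist {ρ : X → X → ℝ} (hrefl : ∀ x, ρ x x = 0)
    (htri : ∀ x y z, ρ x z ≤ ρ x y + ρ y z) (hword : ∀ g x, ρ x (act g x) ≤ wordLength S g)
    (hdist : ∀ x y, ρ x y ≤ dist x y) (x y : X) : ρ x y ≤ chainDist S act dist x y :=
  le_csInf (chainSums_nonempty x y) fun _ => le_of_mem_chainSums hrefl htri hword hdist

lemma chainDist_act_le_one {s : G} (hs : s ∈ S ∨ s⁻¹ ∈ S) (x : X) :
    chainDist S act dist x (act s x) ≤ 1 :=
  (chainDist_le_wordLength s x).trans (by exact_mod_cast wordLength_le_one S hs)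

lemma chainDist_act_le_one' (hact1 : ∀ x, act 1 x = x)
    (hactmul : ∀ g h x, act (g * h) x = act g (act h x)) {s : G} (hs : s ∈ S) (x : X) :
    chainDist S act dist (act s x) x ≤ 1 := by
  simpa [act_inv_act hact1 hactmul] using
    chainDist_act_le_one (act := act) (s := s⁻¹) (.inr (by simpa using hs)) (act s x)

end ChainDist

def IsMetricFunction {X : Type*} (ρ : X → X → ℝ) : Prop :=
  (∀ x y, 0 ≤ ρ x y) ∧ (∀ x y, ρ x y = 0 ↔ x = y) ∧
    (∀ x y, ρ x y = ρ y x) ∧ (∀ x y z, ρ x z ≤ ρ x y + ρ y z)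

lemma IsMetricFunction.symmetrize {X : Type*} {μ ρ : X → X → ℝ} (hμ : IsMetricFunction μ)
    (hμρ : ∀ x y, μ x y ≤ ρ x y) (hrefl : ∀ x, ρ x x = 0)
    (htri : ∀ x y z, ρ x z ≤ ρ x y + ρ y z) :
    IsMetricFunction fun x y => (ρ x y + ρ y x) / 2 := by
  obtain ⟨hμpos, hμzero, -, -⟩ := hμ
  refine ⟨fun x y => ?_, fun x y => ⟨fun h => ?_, ?_⟩, fun x y => by ring_nf,
    fun x y z => by linarith [htri x y z, htri z y x]⟩
  · linarith [hμpos x y, hμρ x y, hμpos y x, hμρ y x]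
  · refine (hμzero x y).1 (le_antisymm ?_ (hμpos x y))
    linarith [hμρ x y, hμpos y x, hμρ y x]
  · rintro rfl
    simp [hrefl]

theorem warped_metric_chain_formula_general {X : Type*} [MetricSpace X] {G : Type*} [Group G]
    (S : Set G) (hSgen : Subgroup.closure S = ⊤)
    (act : G → X → X)
    (hact1 : ∀ x, act 1 x = x) (hactmul : ∀ g h x, act (g * h) x = act g (act h x))
    (dΓ : X → X → ℝ)
    (hmetric : (∀ x y, 0 ≤ dΓ x y) ∧ (∀ x y, dΓ x y = 0 ↔ x = y) ∧
      (∀ x y, dΓ x y = dΓ y x) ∧ (∀ x y z, dΓ x z ≤ dΓ x y + dΓ y z))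
    (hle : ∀ x y, dΓ x y ≤ dist x y)
    (hgen : ∀ x, ∀ s ∈ S, dΓ x (act s x) ≤ 1)
    (hgreatest : ∀ ρ : X → X → ℝ,
      ((∀ x y, 0 ≤ ρ x y) ∧ (∀ x y, ρ x y = 0 ↔ x = y) ∧
        (∀ x y, ρ x y = ρ y x) ∧ (∀ x y z, ρ x z ≤ ρ x y + ρ y z)) →
      (∀ x y, ρ x y ≤ dist x y) → (∀ x, ∀ s ∈ S, ρ x (act s x) ≤ 1) →
      ∀ x y, ρ x y ≤ dΓ x y) :
    ∀ x x' : X, dΓ x x' = sInf (chainSums S act dist x x') := by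
  have ⟨_, hzero, hsymm, htri⟩ := hmetric
  have hrefl : ∀ x, dΓ x x = 0 := fun x => (hzero x x).2 rfl
  set ρ := chainDist S act dist
  have hΓρ : ∀ x y, dΓ x y ≤ ρ x y :=
    le_chainDist hrefl htri (le_wordLength_of_le_one hSgen hact1 hactmul hrefl hsymm htri hgen) hle
  have hσ : ∀ x y, (ρ x y + ρ y x) / 2 ≤ dΓ x y := by
    refine hgreatest _
      (IsMetricFunction.symmetrize hmetric hΓρ (chainDist_self hact1) chainDist_triangle)
      (fun x y => ?_) (fun x s hs => ?_)
    · linarith [chainDist_le_dist (S := S) hact1 x y, chainDist_le_dist (S := S) hact1 y x,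
        dist_comm x y]
    · linarith [chainDist_act_le_one (act := act) (.inl hs) x,
        chainDist_act_le_one' hact1 hactmul hs x]
  intro x x'
  show dΓ x x' = ρ x x'
  exact le_antisymm (hΓρ x x') (by linarith [hσ x x', hΓρ x' x, hsymm x x'])

/-- the warped metric (the greatest metric below `d` with `d_Γ(x,sx) ≤ 1`)
is given by the infimum of chain sums. -/
theorem warped_metric_chain_formula {X : Type*} [MetricSpace X] {G : Type*} [Group G]
    (S : Set G) (hSfin : S.Finite) (hSgen : Subgroup.closure S = ⊤)
    (act : G → X → X)
    (hact1 : ∀ x, act 1 x = x) (hactmul : ∀ g h x, act (g * h) x = act g (act h x))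
    (hcont : ∀ g, Continuous (act g))
    (dΓ : X → X → ℝ)
    (hmetric : (∀ x y, 0 ≤ dΓ x y) ∧ (∀ x y, dΓ x y = 0 ↔ x = y) ∧
      (∀ x y, dΓ x y = dΓ y x) ∧ (∀ x y z, dΓ x z ≤ dΓ x y + dΓ y z))
    (hle : ∀ x y, dΓ x y ≤ dist x y)
    (hgen : ∀ x, ∀ s ∈ S, dΓ x (act s x) ≤ 1)
    (hgreatest : ∀ ρ : X → X → ℝ,
      ((∀ x y, 0 ≤ ρ x y) ∧ (∀ x y, ρ x y = 0 ↔ x = y) ∧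
        (∀ x y, ρ x y = ρ y x) ∧ (∀ x y z, ρ x z ≤ ρ x y + ρ y z)) →
      (∀ x y, ρ x y ≤ dist x y) → (∀ x, ∀ s ∈ S, ρ x (act s x) ≤ 1) →
      ∀ x y, ρ x y ≤ dΓ x y) :
    ∀ x x' : X, dΓ x x' = sInf (chainSums S act dist x x') :=
  warped_metric_chain_formula_general S hSgen act hact1 hactmul dΓ hmetric hle hgen hgreatest
end

section
/- If y and y' lie in different orbits of the Γ-action on a proper metric space Y (equivalently, δ_n(y,y') > 0 for all n), then the warped distance d_s(y,y') tends to infinity as s → ∞. -/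
open scoped BigOperators

noncomputable def warpDist {G : Type*} [Group G] {X : Type*} (S : Set G) (act : G → X → X)
    (d : X → X → ℝ) (x x' : X) : ℝ :=
  sInf (chainSums S act d x x')

/-- `δ_n(y,y')`: the minimal cost `∑_{i=0}^n d(y_{2i}, y_{2i+1})` over sequences
`y₀ = y, …, y_{2n+1} = y'` with `y_{2i} = s·y_{2i-1}` for some `s ∈ S`
(the sequence is encoded as `n+1` consecutive pairs `(y_{2i}, y_{2i+1})`). -/
noncomputable def deltaCost {G : Type*} [Group G] {Y : Type*} [MetricSpace Y]
    (S : Set G) (act : G → Y → Y) (n : ℕ) (y y' : Y) : ℝ :=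
  sInf {c | ∃ ys : Fin (n + 1) → Y × Y,
    (ys 0).1 = y ∧ (ys (Fin.last n)).2 = y' ∧
    (∀ i : Fin n, ∃ s ∈ S, (ys i.succ).1 = act s ((ys i.castSucc).2)) ∧
    c = ∑ i : Fin (n + 1), dist (ys i).1 (ys i).2}

/-! A path from `y` to `y'` whose group elements have total word length at most `M` becomes, after
spelling each element as a word in `S ∪ S⁻¹`, a path with at most `M` letter steps and the same
displacement. Hence its warped cost is at least `min M (s * ε_M)`, where `ε_M` bounds from below the
displacement of such letter paths. That `ε_M > 0` follows by induction on `M`: if the last letter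
is `g` and the last displacement is small, continuity of `g⁻¹` turns the path into a cheap path to
`g⁻¹ y'`, which again lies outside the orbit of `y`; finiteness of `S` makes the bound uniform. -/

open Filter Topology MulAction
open scoped Pointwise

section Reachable

variable {G Y : Type*} [Group G] [MulAction G Y] [PseudoMetricSpace Y]

/-- `ReachableAtCost F y n z c`: some path from `y` to `z` alternating displacements with at most
`n` applications of letters of `F` has total displacement at most `c`. When `1 ∈ S`, the infimum of
the `c` with `ReachableAtCost S y n z c` is `deltaCost S (· • ·) n y z`. -/
def ReachableAtCost (F : Set G) (y : Y) : ℕ → Y → ℝ → Prop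
  | 0, z, c => dist y z ≤ c
  | n + 1, z, c =>
      ReachableAtCost F y n z c ∨ ∃ g ∈ F, ∃ w, ReachableAtCost F y n w (c - dist (g • w) z)

namespace ReachableAtCost

variable {F : Set G} {y : Y}

theorem nonneg : ∀ {n : ℕ} {z : Y} {c : ℝ}, ReachableAtCost F y n z c → 0 ≤ c
  | 0, _, _, h => dist_nonneg.trans h
  | _ + 1, _, _, .inl h => h.nonneg
  | _ + 1, z, _, .inr ⟨g, _, w, h⟩ => by linarith [h.nonneg, dist_nonneg (x := g • w) (y := z)]

theorem mono : ∀ {n : ℕ} {w z : Y} {c c' : ℝ}, ReachableAtCost F y n w c →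
    c + dist w z ≤ c' → ReachableAtCost F y n z c'
  | 0, w, z, _, _, h, hc => (dist_triangle y w z).trans (by rw [ReachableAtCost] at h; linarith)
  | _ + 1, _, _, _, _, .inl h, hc => .inl (h.mono hc)
  | _ + 1, w, z, _, _, .inr ⟨g, hg, u, h⟩, hc => .inr ⟨g, hg, u, h.mono (by
      linarith [dist_triangle (g • u) w z, dist_self u])⟩

theorem mono_steps {n m : ℕ} {z : Y} {c : ℝ} (h : ReachableAtCost F y n z c) (hnm : n ≤ m) :
    ReachableAtCost F y m z c := by
  induction m, hnm using Nat.le_induction with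
  | base => exact h
  | succ _ _ ih => exact .inl ih

theorem smul {n : ℕ} {w : Y} {c : ℝ} (h : ReachableAtCost F y n w c) {g : G} (hg : g ∈ F) :
    ReachableAtCost F y (n + 1) (g • w) c :=
  .inr ⟨g, hg, w, by simpa using h⟩

theorem list_prod_smul {n : ℕ} {w : Y} {c : ℝ} (h : ReachableAtCost F y n w c) :
    ∀ l : List G, (∀ g ∈ l, g ∈ F) → ReachableAtCost F y (n + l.length) (l.prod • w) c
  | [], _ => by simpa using h
  | g :: l, hl => by
    simpa [mul_smul, ← add_assoc] using
      (h.list_prod_smul l fun x hx => hl x (List.mem_cons_of_mem g hx)).smul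
        (hl g List.mem_cons_self)

end ReachableAtCost

theorem eventually_forall_not_reachableAtCost_of_inv_smul [ContinuousConstSMul G Y] {F : Set G}
    {y z : Y} {n : ℕ} {g : G} (h : ∀ᶠ c in 𝓝 0, ¬ReachableAtCost F y n (g⁻¹ • z) c) :
    ∀ᶠ c in 𝓝 0, ∀ w, ¬ReachableAtCost F y n w (c - dist (g • w) z) := by
  obtain ⟨ε, hε, hε'⟩ := Metric.eventually_nhds_iff.1 h
  obtain ⟨η, hη, hη'⟩ := Metric.continuousAt_iff.1
    ((continuous_const_smul g⁻¹).continuousAt (x := z)) (ε / 2) (half_pos hε)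
  filter_upwards [eventually_lt_nhds (lt_min hη (half_pos hε))] with c hc w hw
  have hgw : dist (g • w) z < η := by linarith [hw.nonneg, min_le_left η (ε / 2)]
  have hw' : dist w (g⁻¹ • z) < ε / 2 := by simpa using hη' hgw
  refine hε' ?_ (hw.mono le_rfl)
  rw [Real.dist_0_eq_abs, abs_lt]
  constructor <;> linarith [hw.nonneg, dist_nonneg (x := w) (y := g⁻¹ • z),
    dist_nonneg (x := g • w) (y := z), min_le_right η (ε / 2)]

end Reachable

section Warped

variable {G Y : Type*} [Group G] {S : Set G}

theorem exists_ofFn_prod_eq_of_closure_eq_top (hS : Subgroup.closure S = ⊤) (g : G) :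
    ∃ f : Fin (wordLength S g) → G, (∀ i, f i ∈ S ∪ S⁻¹) ∧ (List.ofFn f).prod = g := by
  have hg : g ∈ Submonoid.closure (S ∪ S⁻¹) := by
    rw [← Subgroup.closure_toSubmonoid, hS]
    exact Subgroup.mem_top g
  obtain ⟨l, hl, rfl⟩ := Submonoid.exists_list_of_mem_closure hg
  exact Nat.sInf_mem (s := {n | ∃ f : Fin n → G, (∀ i, f i ∈ S ∨ (f i)⁻¹ ∈ S) ∧
    (List.ofFn f).prod = l.prod}) ⟨l.length, l.get, fun i => hl _ (l.get_mem i), by simp⟩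

variable [PseudoMetricSpace Y] [MulAction G Y]

theorem ReachableAtCost.smul_wordLength (hS : Subgroup.closure S = ⊤) {y w : Y} {n : ℕ} {c : ℝ}
    (h : ReachableAtCost (S ∪ S⁻¹) y n w c) (g : G) :
    ReachableAtCost (S ∪ S⁻¹) y (n + wordLength S g) (g • w) c := by
  obtain ⟨f, hf, hfg⟩ := exists_ofFn_prod_eq_of_closure_eq_top hS g
  simpa [hfg] using h.list_prod_smul (List.ofFn f) (by simpa [List.mem_ofFn] using hf)

theorem reachableAtCost_of_chain (hS : Subgroup.closure S = ⊤) :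
    ∀ {N : ℕ} (xs : Fin (N + 1) → Y) (γs : Fin N → G),
      ReachableAtCost (S ∪ S⁻¹) (xs 0) (∑ i, wordLength S (γs i)) (xs (Fin.last N))
        (∑ i, dist (γs i • xs i.castSucc) (xs i.succ))
  | 0, _, _ => by simp [ReachableAtCost]
  | N + 1, xs, γs => by
    have hprefix := (reachableAtCost_of_chain hS (fun i => xs i.castSucc)
      (fun i => γs i.castSucc)).smul_wordLength hS (γs (Fin.last N))
    rw [Fin.sum_univ_castSucc, Fin.sum_univ_castSucc]
    exact hprefix.mono (by simp)

theorem min_le_warpDist (hS : Subgroup.closure S = ⊤)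
    {y y' : Y} {M : ℕ} {ε s : ℝ} (hε : ∀ c, ReachableAtCost (S ∪ S⁻¹) y M y' c → ε ≤ c)
    (hs : 0 ≤ s) :
    min (M : ℝ) (s * ε) ≤ warpDist S (· • ·) (fun a b => s * dist a b) y y' := by
  refine le_csInf ⟨_, 1, ![y, y'], ![1], rfl, rfl, rfl⟩ ?_
  rintro _ ⟨N, xs, γs, rfl, rfl, rfl⟩
  rw [Finset.sum_add_distrib, ← Finset.mul_sum, ← Nat.cast_sum]
  have hD : 0 ≤ ∑ i, dist (γs i • xs i.castSucc) (xs i.succ) :=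
    Finset.sum_nonneg fun _ _ => dist_nonneg
  rcases le_or_gt (∑ i, wordLength S (γs i)) M with hW | hW
  · have hεD := hε _ ((reachableAtCost_of_chain hS xs γs).mono_steps hW)
    exact (min_le_right _ _).trans <|
      le_add_of_nonneg_of_le (Nat.cast_nonneg _) (mul_le_mul_of_nonneg_left hεD hs)
  · exact (min_le_left _ _).trans <|
      le_add_of_le_of_nonneg (mod_cast hW.le) (mul_nonneg hs hD)

end Warped

section Positivity

variable {G Y : Type*} [Group G] [MetricSpace Y] [MulAction G Y] [ContinuousConstSMul G Y]
  {F : Set G}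

theorem eventually_not_reachableAtCost (hF : F.Finite) {y : Y} :
    ∀ (n : ℕ) {z : Y}, z ∉ orbit G y → ∀ᶠ c in 𝓝 0, ¬ReachableAtCost F y n z c
  | 0, z, hz => by
    have hyz : 0 < dist y z := dist_pos.2 fun h => hz (h ▸ mem_orbit_self y)
    filter_upwards [eventually_lt_nhds hyz] with c hc
    exact not_le.2 hc
  | n + 1, z, hz => by
    have hletter : ∀ g ∈ F, ∀ᶠ c in 𝓝 0, ∀ w, ¬ReachableAtCost F y n w (c - dist (g • w) z) :=
      fun g _ => eventually_forall_not_reachableAtCost_of_inv_smul <|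
        eventually_not_reachableAtCost hF n fun h => hz (by simpa using mem_orbit_of_mem_orbit g h)
    filter_upwards [eventually_not_reachableAtCost hF n hz, hF.eventually_all.2 hletter]
      with c hn hletter
    rintro (h | ⟨g, hg, w, hw⟩)
    exacts [hn h, hletter g hg w hw]

theorem exists_pos_forall_reachableAtCost_le (hF : F.Finite) {y z : Y}
    (hz : z ∉ orbit G y) (n : ℕ) : ∃ ε > 0, ∀ c, ReachableAtCost F y n z c → ε ≤ c := by
  obtain ⟨ε, hε, hε'⟩ := Metric.eventually_nhds_iff.1 (eventually_not_reachableAtCost hF n hz)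
  refine ⟨ε, hε, fun c hc => not_lt.1 fun hlt => hε' ?_ hc⟩
  rwa [Real.dist_0_eq_abs, abs_of_nonneg hc.nonneg]

theorem tendsto_warpDist_atTop {S : Set G} (hSfin : S.Finite) (hS : Subgroup.closure S = ⊤)
    {y y' : Y} (hy' : y' ∉ orbit G y) :
    Tendsto (fun s : ℝ => warpDist S (· • ·) (fun a b => s * dist a b) y y') atTop atTop := by
  refine tendsto_atTop.2 fun b => ?_
  obtain ⟨ε, hε, hεc⟩ := exists_pos_forall_reachableAtCost_le (hSfin.union hSfin.inv) hy' ⌈b⌉₊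
  filter_upwards [eventually_ge_atTop 0, eventually_ge_atTop (b / ε)] with s hs hsb
  calc b ≤ min (⌈b⌉₊ : ℝ) (s * ε) := le_min (Nat.le_ceil b) ((div_le_iff₀ hε).1 hsb)
    _ ≤ _ := min_le_warpDist hS hεc hs

end Positivity

theorem warped_metric_tendsto_atTop_of_different_orbits_general {Y : Type*} [MetricSpace Y]
    {G : Type*} [Group G] (S : Set G) (hSfin : S.Finite)
    (hSgen : Subgroup.closure S = ⊤)
    (act : G → Y → Y)
    (hact1 : ∀ y, act 1 y = y) (hactmul : ∀ g h y, act (g * h) y = act g (act h y))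
    (hcont : ∀ g, Continuous (act g))
    (y y' : Y) (horb : ∀ γ : G, act γ y ≠ y') :
    Tendsto (fun s : ℝ => warpDist S act (fun a b => s * dist a b) y y') atTop atTop := by
  let _ : MulAction G Y := { smul := act, one_smul := hact1, mul_smul := hactmul }
  have : ContinuousConstSMul G Y := ⟨hcont⟩
  exact tendsto_warpDist_atTop hSfin hSgen fun ⟨γ, hγ⟩ => horb γ hγ

/-- if `y` and `y'` lie in different orbits, then the warped
distance `d_s(y,y')` tends to infinity as `s → ∞`. -/
theorem warped_metric_tendsto_atTop_of_different_orbits {Y : Type*} [MetricSpace Y]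
    [ProperSpace Y]
    {G : Type*} [Group G] (S : Set G) (hSfin : S.Finite) (hSsymm : ∀ s ∈ S, s⁻¹ ∈ S)
    (hS1 : (1 : G) ∈ S) (hSgen : Subgroup.closure S = ⊤)
    (act : G → Y → Y)
    (hact1 : ∀ y, act 1 y = y) (hactmul : ∀ g h y, act (g * h) y = act g (act h y))
    (hcont : ∀ g, Continuous (act g))
    (y y' : Y) (horb : ∀ γ : G, act γ y ≠ y') :
    Tendsto (fun s : ℝ => warpDist S act (fun a b => s * dist a b) y y') atTop atTop :=
  warped_metric_tendsto_atTop_of_different_orbits_general S hSfin hSgen act hact1 hactmul hcont y y'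
    horb
end

section
/- Let f: R₊ → R₊ be nondecreasing and unbounded with liminf_{s→0⁺} f(s)/s > 0. Then there exists a nondecreasing, unbounded function c: R₊ → R₊ with c ≤ f and c(θr) ≥ θ·c(r) for all θ ∈ [0,1] and r ≥ 0. -/
open Filter Set

/-!
Take `c(t) = t · m(t)` with `m(t) = inf_{0<s≤t} f(s)/s`. Since `m` is antitone, `c(θr) ≥ θ c(r)`,
and `c ≤ f` is the case `s = t` of the infimum. The liminf condition together with the
monotonicity of `f` makes `m(t) > 0` for every `t > 0`, and this is what forces `c` to be
unbounded: for `s` below a fixed `s₀` the ratio `f(s)/s` stays above `m(s₀)`, while beyond `s₀`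
the function `f` itself is large.
-/

noncomputable def ratioInf (f : ℝ → ℝ) (t : ℝ) : ℝ :=
  sInf ((fun s => f s / s) '' Ioc 0 t)

noncomputable def scalingMinorant (f : ℝ → ℝ) (t : ℝ) : ℝ :=
  t * ratioInf f t

section

variable {f : ℝ → ℝ}

lemma bddBelow_ratio_image (hf0 : ∀ s, 0 ≤ s → 0 ≤ f s) (t : ℝ) :
    BddBelow ((fun s => f s / s) '' Ioc 0 t) := by
  refine ⟨0, ?_⟩
  rintro _ ⟨s, hs, rfl⟩
  exact div_nonneg (hf0 s hs.1.le) hs.1.le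

lemma ratioInf_nonneg (hf0 : ∀ s, 0 ≤ s → 0 ≤ f s) (t : ℝ) : 0 ≤ ratioInf f t := by
  refine Real.sInf_nonneg ?_
  rintro _ ⟨s, hs, rfl⟩
  exact div_nonneg (hf0 s hs.1.le) hs.1.le

lemma ratioInf_le (hf0 : ∀ s, 0 ≤ s → 0 ≤ f s) {s t : ℝ} (hs : s ∈ Ioc 0 t) :
    ratioInf f t ≤ f s / s :=
  csInf_le (bddBelow_ratio_image hf0 t) ⟨s, hs, rfl⟩

lemma mul_ratioInf_le (hf0 : ∀ s, 0 ≤ s → 0 ≤ f s) {s t : ℝ} (hs : s ∈ Ioc 0 t) :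
    s * ratioInf f t ≤ f s := by
  have := mul_le_mul_of_nonneg_left (ratioInf_le hf0 hs) hs.1.le
  rwa [mul_div_cancel₀ _ hs.1.ne'] at this

lemma le_ratioInf {a t : ℝ} (ht : 0 < t) (h : ∀ s ∈ Ioc 0 t, a ≤ f s / s) :
    a ≤ ratioInf f t :=
  le_csInf ⟨_, t, ⟨ht, le_rfl⟩, rfl⟩ (by rintro _ ⟨s, hs, rfl⟩; exact h s hs)

lemma ratioInf_antitoneOn (hf0 : ∀ s, 0 ≤ s → 0 ≤ f s) :
    AntitoneOn (ratioInf f) (Ioi 0) := fun a ha b _ hab =>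
  csInf_le_csInf (bddBelow_ratio_image hf0 b) ⟨_, a, ⟨ha, le_rfl⟩, rfl⟩
    (image_mono (Ioc_subset_Ioc_right hab))

lemma ratioInf_pos (hf0 : ∀ s, 0 ≤ s → 0 ≤ f s) (hmono : MonotoneOn f (Ici 0))
    {ε : ℝ} (hε : 0 < ε) (hsmall : ∀ᶠ s in nhdsWithin 0 (Ioi 0), ε ≤ f s / s)
    {t : ℝ} (ht : 0 < t) : 0 < ratioInf f t := by
  obtain ⟨u, hu, hεu⟩ := mem_nhdsGT_iff_exists_Ioo_subset.1 hsmall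
  have hu : (0 : ℝ) < u := hu
  have hfu : ε * (u / 2) ≤ f (u / 2) :=
    (le_div_iff₀ (by positivity)).1 (hεu ⟨by positivity, by linarith⟩)
  -- below `u` the ratio is at least `ε`; above `u` it is at least `f (u/2) / t`
  refine lt_of_lt_of_le (lt_min hε (by positivity : 0 < ε * (u / 2) / t))
    (le_ratioInf ht fun s ⟨hs0, hst⟩ => ?_)
  rcases lt_or_ge s u with hsu | hus
  · exact (min_le_left _ _).trans (hεu ⟨hs0, hsu⟩)
  · have hf : f (u / 2) ≤ f s := hmono (by simp only [mem_Ici]; positivity)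
      (by simp only [mem_Ici]; linarith) (by linarith)
    calc min ε (ε * (u / 2) / t) ≤ ε * (u / 2) / t := min_le_right _ _
      _ ≤ f s / t := by gcongr; linarith
      _ ≤ f s / s := div_le_div_of_nonneg_left (hf0 s hs0.le) hs0 hst

lemma scalingMinorant_nonneg (hf0 : ∀ s, 0 ≤ s → 0 ≤ f s) {t : ℝ} (ht : 0 ≤ t) :
    0 ≤ scalingMinorant f t :=
  mul_nonneg ht (ratioInf_nonneg hf0 t)

lemma scalingMinorant_le (hf0 : ∀ s, 0 ≤ s → 0 ≤ f s) {t : ℝ} (ht : 0 ≤ t) :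
    scalingMinorant f t ≤ f t := by
  rcases ht.eq_or_lt with rfl | ht
  · simpa [scalingMinorant] using hf0 0 le_rfl
  · exact mul_ratioInf_le hf0 ⟨ht, le_rfl⟩

lemma le_scalingMinorant {a t : ℝ} (ht : 0 < t) (h : ∀ s ∈ Ioc 0 t, a * s ≤ t * f s) :
    a ≤ scalingMinorant f t := by
  have : a / t ≤ ratioInf f t := le_ratioInf ht fun s hs => by
    rw [div_le_div_iff₀ ht hs.1]; linarith [h s hs]
  rwa [div_le_iff₀ ht, mul_comm] at this

lemma scalingMinorant_monotoneOn (hf0 : ∀ s, 0 ≤ s → 0 ≤ f s)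
    (hmono : MonotoneOn f (Ici 0)) : MonotoneOn (scalingMinorant f) (Ici 0) := by
  rintro a (ha : 0 ≤ a) b (hb : 0 ≤ b) hab
  rcases ha.eq_or_lt with rfl | ha
  · simpa [scalingMinorant] using scalingMinorant_nonneg hf0 hb
  refine le_scalingMinorant (ha.trans_le hab) fun s ⟨hs0, hsb⟩ => ?_
  rcases le_or_gt s a with hsa | has
  · calc scalingMinorant f a * s = a * (s * ratioInf f a) := by unfold scalingMinorant; ring
      _ ≤ b * f s := mul_le_mul hab (mul_ratioInf_le hf0 ⟨hs0, hsa⟩)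
          (mul_nonneg hs0.le (ratioInf_nonneg hf0 a)) hb
  · calc scalingMinorant f a * s ≤ f a * b :=
          mul_le_mul (scalingMinorant_le hf0 ha.le) hsb hs0.le (hf0 a ha.le)
      _ ≤ b * f s := by
          rw [mul_comm]
          exact mul_le_mul_of_nonneg_left (hmono ha.le (ha.le.trans has.le) has.le) hb

lemma scalingMinorant_mul_le (hf0 : ∀ s, 0 ≤ s → 0 ≤ f s) {θ r : ℝ} (hθ : θ ∈ Icc 0 1)
    (hr : 0 ≤ r) : θ * scalingMinorant f r ≤ scalingMinorant f (θ * r) := by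
  rcases hθ.1.eq_or_lt with rfl | hθ0
  · simp [scalingMinorant]
  rcases hr.eq_or_lt with rfl | hr
  · simp [scalingMinorant]
  have hθr : θ * r ≤ r := mul_le_of_le_one_left hr.le hθ.2
  calc θ * scalingMinorant f r = θ * r * ratioInf f r := by unfold scalingMinorant; ring
    _ ≤ θ * r * ratioInf f (θ * r) := by
        gcongr
        exact ratioInf_antitoneOn hf0 (mem_Ioi.2 (mul_pos hθ0 hr)) (mem_Ioi.2 hr) hθr

lemma tendsto_scalingMinorant (hf0 : ∀ s, 0 ≤ s → 0 ≤ f s) (hunb : Tendsto f atTop atTop)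
    (hpos : ∀ t, 0 < t → 0 < ratioInf f t) : Tendsto (scalingMinorant f) atTop atTop := by
  refine tendsto_atTop.2 fun M => ?_
  obtain ⟨s₀, hs₀⟩ :=
    ((hunb.eventually_ge_atTop M).and (eventually_gt_atTop 0)).exists_forall_of_atTop
  obtain ⟨hfs₀, hs₀0⟩ := hs₀ s₀ le_rfl
  have hη := hpos s₀ hs₀0
  filter_upwards [eventually_ge_atTop s₀, eventually_ge_atTop (M / ratioInf f s₀)]
    with t hts₀ htM
  have ht : 0 < t := hs₀0.trans_le hts₀
  refine le_scalingMinorant ht fun s ⟨hs0, hst⟩ => ?_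
  rcases le_or_gt s₀ s with hs₀s | hss₀
  · obtain ⟨hfs, -⟩ := hs₀ s hs₀s
    nlinarith [hf0 s hs0.le]
  · have hfs := mul_ratioInf_le hf0 ⟨hs0, hss₀.le⟩
    rw [div_le_iff₀ hη] at htM
    nlinarith

end

/-- Lemma on concave-like minorants: if `f : ℝ₊ → ℝ₊` is nondecreasing,
unbounded, and `liminf_{s→0⁺} f(s)/s > 0`, then there is a nondecreasing unbounded
`c ≤ f` with `c(θr) ≥ θ·c(r)` for all `θ ∈ [0,1]`, `r ≥ 0`. -/
theorem exists_scaling_minorant (f : ℝ → ℝ)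
    (hf0 : ∀ s, 0 ≤ s → 0 ≤ f s)
    (hmono : MonotoneOn f (Set.Ici (0 : ℝ)))
    (hunb : Tendsto f atTop atTop)
    (hliminf : ∃ ε > 0, ∀ᶠ s in nhdsWithin 0 (Set.Ioi 0), ε ≤ f s / s) :
    ∃ c : ℝ → ℝ,
      (∀ s, 0 ≤ s → 0 ≤ c s) ∧
      MonotoneOn c (Set.Ici (0 : ℝ)) ∧
      Tendsto c atTop atTop ∧
      (∀ r, 0 ≤ r → c r ≤ f r) ∧
      (∀ θ ∈ Set.Icc (0 : ℝ) 1, ∀ r, 0 ≤ r → θ * c r ≤ c (θ * r)) := by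
  obtain ⟨ε, hε, hsmall⟩ := hliminf
  exact ⟨scalingMinorant f, fun _ => scalingMinorant_nonneg hf0,
    scalingMinorant_monotoneOn hf0 hmono,
    tendsto_scalingMinorant hf0 hunb fun _ => ratioInf_pos hf0 hmono hε hsmall,
    fun _ => scalingMinorant_le hf0, fun _ hθ _ => scalingMinorant_mul_le hf0 hθ⟩
end

section
/- Let F: R₊ → R₊ be nondecreasing and unbounded with limsup_{s→0⁺} F(s)/s < ∞. Then there exists a nondecreasing, unbounded function C: R₊ → R₊ with C ≥ F and C(θr) ≤ θ·C(r) for all θ ∈ [0,1] and r ≥ 0. -/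
/-!
Take `C t = t * g t` with `g t = sup_{0 < s ≤ t} F s / s`. The bound on `F s / s` near `0`
together with monotonicity of `F` (which gives `F s / s ≤ F t / δ` for `δ ≤ s ≤ t`) makes `g`
finite; `g` is nondecreasing as a supremum over growing intervals, so
`C (θ r) = θ r g (θ r) ≤ θ r g r = θ C r`, and `C ≥ F` since `g t ≥ F t / t` for `t > 0`, while at `0` the bound near `0` forces
`F 0 ≤ 0 = C 0`.
-/

open Filter Set Topology

noncomputable def slopeSup (F : ℝ → ℝ) (t : ℝ) : ℝ :=
  sSup ((fun s => F s / s) '' Ioc 0 t)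

section SelfMul

variable {g : ℝ → ℝ}

lemma self_mul_apply_nonneg (hg0 : ∀ t, 0 < t → 0 ≤ g t) {r : ℝ} (hr : 0 ≤ r) :
    0 ≤ r * g r := by
  rcases hr.eq_or_lt with rfl | hr
  · simp
  · exact mul_nonneg hr.le (hg0 r hr)

lemma monotoneOn_self_mul_apply (hg : MonotoneOn g (Ioi 0)) (hg0 : ∀ t, 0 < t → 0 ≤ g t) :
    MonotoneOn (fun t => t * g t) (Ici 0) := by
  intro a ha b hb hab
  rcases (mem_Ici.mp ha).eq_or_lt with rfl | ha
  · simpa using self_mul_apply_nonneg hg0 hb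
  · exact mul_le_mul hab (hg ha (ha.trans_le hab) hab) (hg0 a ha) hb

lemma self_mul_apply_scaling (hg : MonotoneOn g (Ioi 0)) (hg0 : ∀ t, 0 < t → 0 ≤ g t) :
    ∀ θ ∈ Icc (0 : ℝ) 1, ∀ r, 0 ≤ r → θ * r * g (θ * r) ≤ θ * (r * g r) := by
  rintro θ ⟨hθ0, hθ1⟩ r hr
  rcases (mul_nonneg hθ0 hr).eq_or_lt with hθr | hθr
  · rw [← hθr, zero_mul]
    exact mul_nonneg hθ0 (self_mul_apply_nonneg hg0 hr)
  · have hθr_le : θ * r ≤ r := mul_le_of_le_one_left hr hθ1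
    calc θ * r * g (θ * r) ≤ θ * r * g r :=
          mul_le_mul_of_nonneg_left (hg hθr (hθr.trans_le hθr_le) hθr_le) hθr.le
      _ = θ * (r * g r) := mul_assoc θ r (g r)

end SelfMul

section SlopeSup

variable {F : ℝ → ℝ}

lemma bddAbove_slopes (hF0 : ∀ s, 0 ≤ s → 0 ≤ F s) (hmono : MonotoneOn F (Ici 0))
    (hlim : ∃ M : ℝ, ∀ᶠ s in 𝓝[>] 0, F s / s ≤ M) (t : ℝ) :
    BddAbove ((fun s => F s / s) '' Ioc 0 t) := by
  obtain ⟨M, hM⟩ := hlim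
  obtain ⟨δ, hδ, hMδ⟩ := (nhdsGT_basis (0 : ℝ)).eventually_iff.mp hM
  refine ⟨max M (F t / δ), ?_⟩
  rintro _ ⟨s, ⟨hs0, hst⟩, rfl⟩
  rcases lt_or_ge s δ with hsδ | hδs
  · exact le_max_of_le_left (hMδ ⟨hs0, hsδ⟩)
  · exact le_max_of_le_right <| div_le_div₀ (hF0 t (hs0.le.trans hst))
      (hmono hs0.le (hs0.le.trans hst) hst) hδ hδs

lemma div_le_slopeSup {t : ℝ} (hbdd : BddAbove ((fun s => F s / s) '' Ioc 0 t)) (ht : 0 < t) :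
    F t / t ≤ slopeSup F t :=
  le_csSup hbdd ⟨t, ⟨ht, le_rfl⟩, rfl⟩

lemma monotoneOn_slopeSup (hbdd : ∀ t, BddAbove ((fun s => F s / s) '' Ioc 0 t)) :
    MonotoneOn (slopeSup F) (Ioi 0) := fun a ha b _ hab =>
  csSup_le_csSup (hbdd b) ⟨F a / a, a, ⟨ha, le_rfl⟩, rfl⟩ (image_mono (Ioc_subset_Ioc_right hab))

lemma le_mul_slopeSup (hF00 : F 0 ≤ 0) (hbdd : ∀ t, BddAbove ((fun s => F s / s) '' Ioc 0 t))
    {r : ℝ} (hr : 0 ≤ r) : F r ≤ r * slopeSup F r := by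
  rcases hr.eq_or_lt with rfl | hr
  · simpa using hF00
  · calc F r = r * (F r / r) := (mul_div_cancel₀ (F r) hr.ne').symm
      _ ≤ r * slopeSup F r := mul_le_mul_of_nonneg_left (div_le_slopeSup (hbdd r) hr) hr.le

end SlopeSup

lemma apply_zero_nonpos_of_eventually_div_le {F : ℝ → ℝ} (hmono : MonotoneOn F (Ici 0))
    (hlim : ∃ M : ℝ, ∀ᶠ s in 𝓝[>] 0, F s / s ≤ M) : F 0 ≤ 0 := by
  obtain ⟨M, hM⟩ := hlim
  have hMs : Tendsto (fun s : ℝ => M * s) (𝓝[>] 0) (𝓝 0) := by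
    simpa using ((continuous_const_mul M).tendsto 0).mono_left nhdsWithin_le_nhds
  refine ge_of_tendsto hMs ?_
  filter_upwards [hM, self_mem_nhdsWithin] with s hs (hs0 : 0 < s)
  exact (hmono self_mem_Ici hs0.le hs0.le).trans (div_le_iff₀ hs0 |>.mp hs)

/-- Lemma on concave-like majorants: if `F : ℝ₊ → ℝ₊` is nondecreasing,
unbounded, and `limsup_{s→0⁺} F(s)/s < ∞`, then there is a nondecreasing unbounded
`C ≥ F` with `C(θr) ≤ θ·C(r)` for all `θ ∈ [0,1]`, `r ≥ 0`. -/
theorem exists_scaling_majorant (F : ℝ → ℝ)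
    (hF0 : ∀ s, 0 ≤ s → 0 ≤ F s)
    (hmono : MonotoneOn F (Set.Ici (0 : ℝ)))
    (hunb : Tendsto F atTop atTop)
    (hlimsup : ∃ M : ℝ, ∀ᶠ s in nhdsWithin 0 (Set.Ioi 0), F s / s ≤ M) :
    ∃ C : ℝ → ℝ,
      (∀ s, 0 ≤ s → 0 ≤ C s) ∧
      MonotoneOn C (Set.Ici (0 : ℝ)) ∧
      Tendsto C atTop atTop ∧
      (∀ r, 0 ≤ r → F r ≤ C r) ∧
      (∀ θ ∈ Set.Icc (0 : ℝ) 1, ∀ r, 0 ≤ r → C (θ * r) ≤ θ * C r) := by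
  have hbdd := bddAbove_slopes hF0 hmono hlimsup
  have hg := monotoneOn_slopeSup hbdd
  have hg0 : ∀ t, 0 < t → 0 ≤ slopeSup F t := fun t ht =>
    (div_nonneg (hF0 t ht.le) ht.le).trans (div_le_slopeSup (hbdd t) ht)
  have hFC : ∀ r, 0 ≤ r → F r ≤ r * slopeSup F r := fun r hr =>
    le_mul_slopeSup (apply_zero_nonpos_of_eventually_div_le hmono hlimsup) hbdd hr
  refine ⟨fun t => t * slopeSup F t, fun s => self_mul_apply_nonneg hg0,
    monotoneOn_self_mul_apply hg hg0, ?_, hFC, self_mul_apply_scaling hg hg0⟩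
  exact tendsto_atTop_mono' atTop ((eventually_ge_atTop 0).mono hFC) hunb
end

section
/- With q₁,…,q_n pairwise coprime integers greater than 1 and x_m = (q_i^{−m})_{i=1}^n ∈ T^n, the stabilisers Γ_m = Stab(x_m) in SL_n(Z) form a nested decreasing sequence (Γ_{m+1} ⊆ Γ_m) whose intersection over all m ≥ 1 is the trivial group {1}. -/
open scoped BigOperators

/-- The stabiliser of the point `x_m = (q_i^{-m})_i ∈ ℝⁿ/ℤⁿ` in `SL_n(ℤ)`:
`A` fixes `x_m` iff each coordinate of `A x_m − x_m` is an integer. -/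
def torusStab {n : ℕ} (q : Fin n → ℤ) (m : ℕ) :
    Set (Matrix.SpecialLinearGroup (Fin n) ℤ) :=
  {A | ∀ i : Fin n, ∃ k : ℤ,
    (∑ j : Fin n, ((A : Matrix (Fin n) (Fin n) ℤ) i j : ℚ) * ((q j : ℚ) ^ m)⁻¹)
      - ((q i : ℚ) ^ m)⁻¹ = k}

/-!
Clearing denominators in a sum of fractions with pairwise coprime denominators shows that
`A` fixes `x_m` iff `q_j ^ m` divides every entry of the `j`-th column of `A - 1`. These
conditions get stronger as `m` grows, and an integer divisible by every power of some `q_j > 1`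
is zero, so only `A = 1` satisfies all of them.
-/

/-- After clearing all denominators, every term but the `t`-th is divisible by `b t`. -/
lemma dvd_of_sum_div_eq_intCast {ι : Type*} [Fintype ι] {a b : ι → ℤ} (hb : ∀ j, b j ≠ 0)
    (hcop : Pairwise fun i j => IsCoprime (b i) (b j)) {k : ℤ}
    (hk : ∑ j, (a j : ℚ) / b j = k) (t : ι) : b t ∣ a t := by
  classical
  set B : ι → ℤ := fun j => ∏ l ∈ Finset.univ.erase j, b l
  have hprod : ∀ j, ∏ l, b l = b j * B j := fun j =>
    (Finset.mul_prod_erase _ _ (Finset.mem_univ j)).symm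
  have hcleared : ∑ j, a j * B j = k * ∏ l, b l := by
    have hterm : ∀ j, (a j : ℚ) / b j * ((∏ l, b l : ℤ) : ℚ) = ((a j * B j : ℤ) : ℚ) := by
      intro j
      rw [hprod j]
      push_cast
      field_simp [hb j]
    have hcast : ((∑ j, a j * B j : ℤ) : ℚ) = ((k * ∏ l, b l : ℤ) : ℚ) := by
      rw [Int.cast_sum, ← Finset.sum_congr rfl fun j _ => hterm j, ← Finset.sum_mul, hk,
        Int.cast_mul]
    exact_mod_cast hcast
  have hrest : b t ∣ ∑ j ∈ Finset.univ.erase t, a j * B j :=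
    Finset.dvd_sum fun j hj => dvd_mul_of_dvd_right
      (Finset.dvd_prod_of_mem _ (Finset.mem_erase.2 ⟨(Finset.ne_of_mem_erase hj).symm,
        Finset.mem_univ t⟩)) _
  have hmain : b t ∣ a t * B t := by
    have hsplit := Finset.add_sum_erase Finset.univ (fun j => a j * B j) (Finset.mem_univ t)
    rw [hcleared] at hsplit
    have hall : b t ∣ k * ∏ l, b l := dvd_mul_of_dvd_right (hprod t ▸ dvd_mul_right _ _) _
    rw [← hsplit] at hall
    exact (dvd_add_left hrest).1 hall
  have hcopB : IsCoprime (b t) (B t) :=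
    IsCoprime.prod_right fun l hl => hcop (Finset.ne_of_mem_erase hl).symm
  exact hcopB.dvd_of_dvd_mul_right hmain

lemma exists_sum_div_eq_intCast_iff {ι : Type*} [Fintype ι] {a b : ι → ℤ}
    (hb : ∀ j, b j ≠ 0) (hcop : Pairwise fun i j => IsCoprime (b i) (b j)) :
    (∃ k : ℤ, ∑ j, (a j : ℚ) / b j = k) ↔ ∀ j, b j ∣ a j := by
  refine ⟨fun ⟨k, hk⟩ => dvd_of_sum_div_eq_intCast hb hcop hk, fun h => ?_⟩
  choose c hc using h
  refine ⟨∑ j, c j, ?_⟩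
  push_cast
  refine Finset.sum_congr rfl fun j _ => ?_
  rw [hc j]
  push_cast
  field_simp [hb j]

lemma Int.eq_zero_of_forall_pow_dvd {a b : ℤ} (hb : b.natAbs ≠ 1)
    (h : ∀ m, 1 ≤ m → b ^ m ∣ a) : a = 0 := by
  by_contra ha
  refine FiniteMultiplicity.not_iff_forall.2 (fun m => ?_) (Int.finiteMultiplicity_iff.2 ⟨hb, ha⟩)
  rcases Nat.eq_zero_or_pos m with rfl | hm
  · simp
  · exact h m hm

lemma mem_torusStab_iff {n : ℕ} {q : Fin n → ℤ} (hq : ∀ i, q i ≠ 0)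
    (hcop : Pairwise fun i j => IsCoprime (q i) (q j)) {m : ℕ}
    {A : Matrix.SpecialLinearGroup (Fin n) ℤ} :
    A ∈ torusStab q m ↔ ∀ i j, q j ^ m ∣ ((A : Matrix (Fin n) (Fin n) ℤ) - 1) i j := by
  have hsum : ∀ i, (∑ j, ((A : Matrix (Fin n) (Fin n) ℤ) i j : ℚ) * ((q j : ℚ) ^ m)⁻¹)
      - ((q i : ℚ) ^ m)⁻¹
      = ∑ j, ((((A : Matrix (Fin n) (Fin n) ℤ) - 1) i j : ℤ) : ℚ) / ((q j ^ m : ℤ) : ℚ) := by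
    intro i
    simp only [Matrix.sub_apply, Matrix.one_apply, Int.cast_sub, Int.cast_pow, Int.cast_ite,
      Int.cast_one, Int.cast_zero, div_eq_mul_inv, sub_mul, ite_mul, one_mul, zero_mul,
      Finset.sum_sub_distrib, Finset.sum_ite_eq, Finset.mem_univ, if_true]
  simp only [torusStab, Set.mem_ofPred_eq, hsum,
    exists_sum_div_eq_intCast_iff (fun j => pow_ne_zero m (hq j))
      (fun i j hij => (hcop hij).pow)]

/-- for pairwise coprime `q_i > 1`, the stabilisers
`Γ_m = Stab(x_m) ⊆ SL_n(ℤ)` are nested and intersect trivially. -/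
theorem torus_stabilizers_nested_trivial_intersection {n : ℕ} (q : Fin n → ℤ)
    (hq : ∀ i, 1 < q i) (hcop : ∀ i j, i ≠ j → IsCoprime (q i) (q j)) :
    (∀ m : ℕ, 1 ≤ m → torusStab q (m + 1) ⊆ torusStab q m) ∧
    (⋂ m ∈ Set.Ici 1, torusStab q m) = {(1 : Matrix.SpecialLinearGroup (Fin n) ℤ)} := by
  have hq0 : ∀ i, q i ≠ 0 := fun i => by linarith [hq i]
  refine ⟨fun m _ A hA => ?_, ?_⟩
  · rw [mem_torusStab_iff hq0 hcop] at hA ⊢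
    exact fun i j => (pow_dvd_pow _ m.le_succ).trans (hA i j)
  ext A
  simp only [Set.mem_iInter, Set.mem_Ici, Set.mem_singleton_iff]
  refine ⟨fun hA => ?_, fun hA m _ => (mem_torusStab_iff hq0 hcop).2 fun i j => by simp [hA]⟩
  have hzero : (A : Matrix (Fin n) (Fin n) ℤ) - 1 = 0 := Matrix.ext fun i j =>
    Int.eq_zero_of_forall_pow_dvd (by have := hq j; omega) fun m hm =>
      (mem_torusStab_iff hq0 hcop).1 (hA m hm) i j
  exact Subtype.ext (sub_eq_zero.1 hzero)
end

section
/- Let n ∈ N, p ∈ [1,∞), a, b > 0, and let (X_i, d_i), 1 ≤ i ≤ n, be metric spaces with d_i(x,x') ≥ a for all x ≠ x'. Suppose ψ_i: X_i → ℓ_p satisfy ρ₋(d_i(x,x')) ≤ ‖ψ_i(x) − ψ_i(x')‖_p ≤ ρ₊(d_i(x,x')) for nondecreasing unbounded ρ₋, ρ₊: [a,∞) → [b,∞). Then there exist nondecreasing unbounded functions c, C: [a,∞) → [b,∞) (depending only on ρ₋ and ρ₊ respectively) and a map ψ: ∏ X_i → ℓ_p such that for all x = (x_i), x' = (x_i')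 with x ≠ x': (b^{p−1}·c(d(x,x')))^{1/p} ≤ ‖ψ(x) − ψ(x')‖_p ≤ C(d(x,x')), where d(x,x') = ∑_i d_i(x_i, x_i'). -/
open scoped BigOperators ENNReal
open Filter

/-!
Interleaving coordinates along an injection `ι × ℕ → ℕ` embeds the `ℓ_p`-sum of finitely many
copies of `ℓ_p` isometrically into `ℓ_p`, so it suffices to control the `ℓ_p`-sum norm of
`(ψ_i(x_i) - ψ_i(x'_i))_i`. It dominates every coordinate, in particular one with
`d_i(x_i, x'_i) ≥ d(x, x') / n`, which gives the lower bound through `ρ₋`; it is at most the sum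
of the coordinates, each of which is at most `ρ₊(d(x, x'))`, which gives the upper bound.
-/

theorem ENNReal.toReal_pos_of_one_le {p : ℝ≥0∞} (h : 1 ≤ p) (hp : p ≠ ⊤) : 0 < p.toReal :=
  ENNReal.toReal_pos (zero_lt_one.trans_le h).ne' hp

theorem hasSum_prod_of_nonneg {ι β : Type*} [Fintype ι] {f : ι × β → ℝ} (hf : 0 ≤ f)
    {a : ι → ℝ} (h : ∀ i, HasSum (fun b => f (i, b)) (a i)) : HasSum f (∑ i, a i) := by
  have hs : Summable f := (summable_prod_of_nonneg hf).2 ⟨fun i => (h i).summable, .of_finite⟩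
  rw [← (hs.hasSum.prod_fiberwise h).unique (hasSum_fintype a)]
  exact hs.hasSum

namespace lp

variable {ι : Type*} [Fintype ι] [Encodable ι] {𝕜 E : Type*} [NormedField 𝕜]
  [NormedAddCommGroup E] [NormedSpace 𝕜 E] {p : ℝ≥0∞}

noncomputable def interleave (g : ι → ℕ → E) : ℕ → E :=
  Function.extend Encodable.encode (fun im : ι × ℕ => g im.1 im.2) 0

theorem hasSum_norm_rpow_interleave (hp : 0 < p.toReal)
    (g : PiLp p (fun _ : ι => lp (fun _ : ℕ => E) p)) :
    HasSum (fun k => ‖interleave (fun i => ⇑(g i)) k‖ ^ p.toReal) (‖g‖ ^ p.toReal) := by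
  have hnorm : ‖g‖ ^ p.toReal = ∑ i, ‖g i‖ ^ p.toReal := by
    rw [PiLp.norm_eq_sum hp, one_div]
    exact Real.rpow_inv_rpow
      (Finset.sum_nonneg fun _ _ => Real.rpow_nonneg (lp.norm_nonneg' _) _) hp.ne'
  have hext : (fun k => ‖interleave (fun i => ⇑(g i)) k‖ ^ p.toReal) =
      Function.extend Encodable.encode (fun im : ι × ℕ => ‖g im.1 im.2‖ ^ p.toReal) 0 := by
    ext k
    rw [interleave, Function.apply_extend (fun v : E => ‖v‖ ^ p.toReal)]
    congr 1
    ext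
    simp [Real.zero_rpow hp.ne']
  rw [hnorm, hext, hasSum_extend_zero Encodable.encode_injective]
  exact hasSum_prod_of_nonneg (fun _ => by positivity) fun i => lp.hasSum_norm hp (g i)

variable [Fact (1 ≤ p)]

noncomputable def interleaveₗᵢ (hp : p ≠ ⊤) :
    PiLp p (fun _ : ι => lp (fun _ : ℕ => E) p) →ₗᵢ[𝕜] lp (fun _ : ℕ => E) p where
  toFun g := ⟨interleave (fun i => ⇑(g i)),
    memℓp_gen (hasSum_norm_rpow_interleave (ENNReal.toReal_pos_of_one_le Fact.out hp) g).summable⟩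
  map_add' g g' := by
    ext1
    simp only [interleave, WithLp.ofLp_add, Pi.add_apply, lp.coeFn_add]
    convert Function.extend_add Encodable.encode _ _ (0 : ℕ → E) 0 using 2
    exacts [rfl, (add_zero 0).symm]
  map_smul' c g := by
    ext1
    simp only [interleave, WithLp.ofLp_smul, Pi.smul_apply, lp.coeFn_smul, RingHom.id_apply]
    convert Function.extend_smul c Encodable.encode _ (0 : ℕ → E) using 2
    exacts [rfl, (smul_zero c).symm]
  norm_map' g := by
    have hp' : 0 < p.toReal := ENNReal.toReal_pos_of_one_le Fact.out hp
    refine (Real.rpow_left_inj (norm_nonneg _) (norm_nonneg _) hp'.ne').1 ?_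
    exact (lp.hasSum_norm hp' _).unique (hasSum_norm_rpow_interleave hp' g)

end lp

structure IsControlFunction (a b : ℝ) (ρ : ℝ → ℝ) : Prop where
  monotoneOn : MonotoneOn ρ (Set.Ici a)
  tendsto : Tendsto ρ atTop atTop
  le_apply : ∀ r, a ≤ r → b ≤ ρ r

namespace IsControlFunction

variable {a b K : ℝ} {ρ : ℝ → ℝ}

theorem const_mul (h : IsControlFunction a b ρ) (hb : 0 ≤ b) (hK : 1 ≤ K) :
    IsControlFunction a b (fun r => K * ρ r) where
  monotoneOn _ hr _ hs hrs := mul_le_mul_of_nonneg_left (h.monotoneOn hr hs hrs) (by linarith)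
  tendsto := h.tendsto.const_mul_atTop (by linarith)
  le_apply r hr :=
    (h.le_apply r hr).trans (le_mul_of_one_le_left (hb.trans (h.le_apply r hr)) hK)

theorem comp_max_div (h : IsControlFunction a b ρ) (hK : 0 < K) :
    IsControlFunction a b (fun r => ρ (max a (r / K))) where
  monotoneOn _ _ _ _ hrs :=
    h.monotoneOn (Set.mem_Ici.2 (le_max_left _ _)) (Set.mem_Ici.2 (le_max_left _ _))
      (max_le_max le_rfl (div_le_div_of_nonneg_right hrs hK.le))
  tendsto := h.tendsto.comp <|
    tendsto_atTop_mono (fun _ => le_max_right _ _) (tendsto_id.atTop_div_const hK)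
  le_apply _ _ := h.le_apply _ (le_max_left _ _)

theorem rpow_div (h : IsControlFunction a b ρ) (hb : 0 < b) {q : ℝ} (hq : 0 < q) :
    IsControlFunction a b (fun r => ρ r ^ q / b ^ (q - 1)) where
  monotoneOn _ hr _ hs hrs := div_le_div_of_nonneg_right
    (Real.rpow_le_rpow (hb.le.trans (h.le_apply _ hr)) (h.monotoneOn hr hs hrs) hq.le)
    (by positivity)
  tendsto := ((tendsto_rpow_atTop hq).comp h.tendsto).atTop_div_const (by positivity)
  le_apply r hr := by
    rw [Real.rpow_sub_one hb.ne', le_div_iff₀ (by positivity), mul_div_cancel₀ _ hb.ne']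
    exact Real.rpow_le_rpow hb.le (h.le_apply r hr) hq.le

end IsControlFunction

theorem PiLp.norm_le_sum_norm {ι : Type*} [Fintype ι] {p : ℝ≥0∞} [Fact (1 ≤ p)]
    {β : ι → Type*} [∀ i, SeminormedAddCommGroup (β i)] (x : PiLp p β) :
    ‖x‖ ≤ ∑ i, ‖x i‖ := by
  classical
  calc ‖x‖ = ‖∑ i, PiLp.single p i (x i)‖ := by
        congr 1
        ext i
        simp
    _ ≤ ∑ i, ‖PiLp.single p i (x i)‖ := norm_sum_le _ _
    _ = ∑ i, ‖x i‖ := by simp only [PiLp.norm_single]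

section SumMetric

variable {ι : Type*} [Fintype ι] {X : ι → Type*} [∀ i, MetricSpace (X i)]

theorem exists_ne_sum_dist_le_card_mul {x x' : ∀ i, X i} (h : x ≠ x') :
    ∃ i, x i ≠ x' i ∧ ∑ j, dist (x j) (x' j) ≤ Fintype.card ι * dist (x i) (x' i) := by
  obtain ⟨j, hj⟩ := Function.ne_iff.1 h
  obtain ⟨i, -, hi⟩ := Finset.exists_max_image Finset.univ (fun i => dist (x i) (x' i))
    ⟨j, Finset.mem_univ j⟩
  refine ⟨i, dist_pos.1 ((dist_pos.2 hj).trans_le (hi j (Finset.mem_univ j))), ?_⟩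
  simpa using Finset.sum_le_card_nsmul Finset.univ _ _ fun k _ => hi k (Finset.mem_univ k)

variable {F : Type*} [SeminormedAddCommGroup F] {p : ℝ≥0∞} [Fact (1 ≤ p)] {f : ∀ i, X i → F}
  {a K : ℝ} {ρ : ℝ → ℝ}

theorem PiLp.le_norm_toLp_sub_of_forall_le (hdisc : ∀ i, ∀ y y' : X i, y ≠ y' → a ≤ dist y y')
    (hρ : MonotoneOn ρ (Set.Ici a))
    (hf : ∀ i, ∀ y y' : X i, y ≠ y' → ρ (dist y y') ≤ ‖f i y - f i y'‖)
    (hK : (Fintype.card ι : ℝ) ≤ K) {x x' : ∀ i, X i} (hx : x ≠ x') :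
    ρ (max a ((∑ i, dist (x i) (x' i)) / K)) ≤
      ‖WithLp.toLp p fun i => f i (x i) - f i (x' i)‖ := by
  obtain ⟨i, hi, hsum⟩ := exists_ne_sum_dist_le_card_mul hx
  have hKpos : 0 < K := (Nat.cast_pos.2 (Fintype.card_pos_iff.2 ⟨i⟩)).trans_le hK
  have hmax : max a ((∑ j, dist (x j) (x' j)) / K) ≤ dist (x i) (x' i) :=
    max_le (hdisc i _ _ hi) <| (div_le_iff₀' hKpos).2 <|
      hsum.trans (mul_le_mul_of_nonneg_right hK dist_nonneg)
  calc ρ (max a ((∑ j, dist (x j) (x' j)) / K))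
      ≤ ρ (dist (x i) (x' i)) := hρ (Set.mem_Ici.2 (le_max_left _ _)) (hdisc i _ _ hi) hmax
    _ ≤ ‖f i (x i) - f i (x' i)‖ := hf i _ _ hi
    _ ≤ _ := PiLp.norm_apply_le (WithLp.toLp p fun i => f i (x i) - f i (x' i)) i

theorem PiLp.norm_toLp_sub_le_of_forall_le (hdisc : ∀ i, ∀ y y' : X i, y ≠ y' → a ≤ dist y y')
    (hρ : MonotoneOn ρ (Set.Ici a)) (hρ_nonneg : ∀ r, a ≤ r → 0 ≤ ρ r)
    (hf : ∀ i, ∀ y y' : X i, y ≠ y' → ‖f i y - f i y'‖ ≤ ρ (dist y y'))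
    (hK : (Fintype.card ι : ℝ) ≤ K) {x x' : ∀ i, X i} (hx : x ≠ x') :
    ‖WithLp.toLp p fun i => f i (x i) - f i (x' i)‖ ≤ K * ρ (∑ i, dist (x i) (x' i)) := by
  set d := ∑ i, dist (x i) (x' i)
  have hdist_le (i : ι) : dist (x i) (x' i) ≤ d :=
    Finset.single_le_sum (fun j _ => dist_nonneg) (Finset.mem_univ i)
  obtain ⟨j, hj⟩ := Function.ne_iff.1 hx
  have hd : a ≤ d := (hdisc j _ _ hj).trans (hdist_le j)
  have hterm (i : ι) : ‖f i (x i) - f i (x' i)‖ ≤ ρ d := by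
    by_cases hi : x i = x' i
    · simpa [hi] using hρ_nonneg d hd
    · exact (hf i _ _ hi).trans (hρ (hdisc i _ _ hi) hd (hdist_le i))
  calc ‖WithLp.toLp p fun i => f i (x i) - f i (x' i)‖
      ≤ ∑ i, ‖f i (x i) - f i (x' i)‖ := PiLp.norm_le_sum_norm _
    _ ≤ ∑ _i : ι, ρ d := Finset.sum_le_sum fun i _ => hterm i
    _ = Fintype.card ι * ρ d := by simp
    _ ≤ K * ρ d := mul_le_mul_of_nonneg_right hK (hρ_nonneg d hd)

end SumMetric

theorem product_embedding_into_lp_general {n : ℕ} (p : ENNReal) [Fact (1 ≤ p)] (hp : p ≠ ⊤)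
    (a b : ℝ) (hb : 0 < b)
    (X : Fin n → Type*) [∀ i, MetricSpace (X i)]
    (hdisc : ∀ i, ∀ x x' : X i, x ≠ x' → a ≤ dist x x')
    (ρminus ρplus : ℝ → ℝ)
    (hρm_mono : MonotoneOn ρminus (Set.Ici a)) (hρp_mono : MonotoneOn ρplus (Set.Ici a))
    (hρm_unb : Tendsto ρminus atTop atTop) (hρp_unb : Tendsto ρplus atTop atTop)
    (hρm_b : ∀ r, a ≤ r → b ≤ ρminus r) (hρp_b : ∀ r, a ≤ r → b ≤ ρplus r)
    (ψ : ∀ i, X i → lp (fun _ : ℕ => ℝ) p)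
    (hψ : ∀ i, ∀ x x' : X i, x ≠ x' →
      ρminus (dist x x') ≤ ‖ψ i x - ψ i x'‖ ∧ ‖ψ i x - ψ i x'‖ ≤ ρplus (dist x x')) :
    ∃ (c C : ℝ → ℝ) (Ψ : (∀ i, X i) → lp (fun _ : ℕ => ℝ) p),
      MonotoneOn c (Set.Ici a) ∧ Tendsto c atTop atTop ∧ (∀ r, a ≤ r → b ≤ c r) ∧
      MonotoneOn C (Set.Ici a) ∧ Tendsto C atTop atTop ∧ (∀ r, a ≤ r → b ≤ C r) ∧
      ∀ x x' : ∀ i, X i, x ≠ x' →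
        (b ^ (p.toReal - 1) * c (∑ i, dist (x i) (x' i))) ^ (1 / p.toReal)
            ≤ ‖Ψ x - Ψ x'‖ ∧
        ‖Ψ x - Ψ x'‖ ≤ C (∑ i, dist (x i) (x' i)) := by
  have hq : 0 < p.toReal := ENNReal.toReal_pos_of_one_le Fact.out hp
  have hK : (Fintype.card (Fin n) : ℝ) ≤ n + 1 := by simp
  -- `n + 1` rather than `n`, so that `c` and `C` are unbounded and `≥ b` also when `n = 0`
  obtain ⟨hc_mono, hc_tendsto, hc_le⟩ :=
    (IsControlFunction.mk hρm_mono hρm_unb hρm_b).comp_max_div (K := n + 1) (by positivity)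
      |>.rpow_div hb hq
  obtain ⟨hC_mono, hC_tendsto, hC_le⟩ :=
    (IsControlFunction.mk hρp_mono hρp_unb hρp_b).const_mul hb.le (K := n + 1) (by simp)
  let Ψ (x : ∀ i, X i) := lp.interleaveₗᵢ (𝕜 := ℝ) hp (WithLp.toLp p fun i => ψ i (x i))
  refine ⟨_, _, Ψ, hc_mono, hc_tendsto, hc_le, hC_mono, hC_tendsto, hC_le, fun x x' hx => ?_⟩
  have hΨ : ‖Ψ x - Ψ x'‖ = ‖WithLp.toLp p fun i => ψ i (x i) - ψ i (x' i)‖ := by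
    rw [← map_sub, LinearIsometry.norm_map]
    rfl
  rw [hΨ, mul_div_cancel₀ _ (by positivity), one_div,
    Real.rpow_rpow_inv (hb.le.trans (hρm_b _ (le_max_left _ _))) hq.ne']
  exact ⟨PiLp.le_norm_toLp_sub_of_forall_le hdisc hρm_mono (fun i y y' h => (hψ i y y' h).1)
      hK hx,
    PiLp.norm_toLp_sub_le_of_forall_le hdisc hρp_mono (fun r hr => hb.le.trans (hρp_b r hr))
      (fun i y y' h => (hψ i y y' h).2) hK hx⟩

/-- embeddings of product spaces: if each uniformly discrete `X_i`
embeds into `ℓ_p` with uniform control functions `ρ₋, ρ₊ : [a,∞) → [b,∞)`, then the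
product `∏ X_i` with the sum metric embeds into `ℓ_p` with control
`(b^{p−1}·c(d))^{1/p}` from below and `C(d)` from above. -/
theorem product_embedding_into_lp {n : ℕ} (p : ENNReal) [Fact (1 ≤ p)] (hp : p ≠ ⊤)
    (a b : ℝ) (ha : 0 < a) (hb : 0 < b)
    (X : Fin n → Type*) [∀ i, MetricSpace (X i)]
    (hdisc : ∀ i, ∀ x x' : X i, x ≠ x' → a ≤ dist x x')
    (ρminus ρplus : ℝ → ℝ)
    (hρm_mono : MonotoneOn ρminus (Set.Ici a)) (hρp_mono : MonotoneOn ρplus (Set.Ici a))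
    (hρm_unb : Tendsto ρminus atTop atTop) (hρp_unb : Tendsto ρplus atTop atTop)
    (hρm_b : ∀ r, a ≤ r → b ≤ ρminus r) (hρp_b : ∀ r, a ≤ r → b ≤ ρplus r)
    (ψ : ∀ i, X i → lp (fun _ : ℕ => ℝ) p)
    (hψ : ∀ i, ∀ x x' : X i, x ≠ x' →
      ρminus (dist x x') ≤ ‖ψ i x - ψ i x'‖ ∧ ‖ψ i x - ψ i x'‖ ≤ ρplus (dist x x')) :
    ∃ (c C : ℝ → ℝ) (Ψ : (∀ i, X i) → lp (fun _ : ℕ => ℝ) p),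
      MonotoneOn c (Set.Ici a) ∧ Tendsto c atTop atTop ∧ (∀ r, a ≤ r → b ≤ c r) ∧
      MonotoneOn C (Set.Ici a) ∧ Tendsto C atTop atTop ∧ (∀ r, a ≤ r → b ≤ C r) ∧
      ∀ x x' : ∀ i, X i, x ≠ x' →
        (b ^ (p.toReal - 1) * c (∑ i, dist (x i) (x' i))) ^ (1 / p.toReal)
            ≤ ‖Ψ x - Ψ x'‖ ∧
        ‖Ψ x - Ψ x'‖ ≤ C (∑ i, dist (x i) (x' i)) :=
  product_embedding_into_lp_general p hp a b hb X hdisc ρminus ρplus hρm_mono hρp_mono hρm_unb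
    hρp_unb hρm_b hρp_b ψ hψ
end
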